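/- In the Chow ring A*(M) of a loopless matroid M of rank r+1 on ground set E = {0,…,n}, set α = Σ_{i ∈ F} x_F (for any fixed i ∈ E) and β = Σ_{i ∉ F} x_F. Then for every positive integer k ≤ r, β^k = Σ_𝓕 x_𝓕, where the sum ranges over all descending k-step flags 𝓕 = {F_1 ⊊ ⋯ ⊊ F_k} of nonempty proper flats satisfying min(F_1) > min(F_2) > ⋯ > min(F_k) > 0. -/

import Mathlib

open Finset

/-- A matroid on a finite ground set, given by its rank function. -/
structure FinMatroid (E : Type*) [DecidableEq E] [Fintype E] where
  rk : Finset E → ℕ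
  rk_empty : rk ∅ = 0
  rk_le_card : ∀ I, rk I ≤ I.card
  rk_mono : ∀ ⦃I J⦄, I ⊆ J → rk I ≤ rk J
  rk_submodular : ∀ I J, rk (I ∪ J) + rk (I ∩ J) ≤ rk I + rk J

namespace FinMatroid

variable {E : Type*} [DecidableEq E] [Fintype E]

/-- A matroid is loopless if every singleton has rank one. -/
def Loopless (M : FinMatroid E) : Prop := ∀ e : E, M.rk {e} = 1

/-- A flat of a matroid: a closed set, i.e. adding any new element increases the rank. -/
def IsFlat (M : FinMatroid E) (F : Finset E) : Prop :=
  ∀ e ∉ F, M.rk F < M.rk (insert e F)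

/-- The characteristic polynomial `χ_M(λ) = Σ_{I ⊆ E} (-1)^{|I|} λ^{crk I}`. -/
noncomputable def charPoly (M : FinMatroid E) : Polynomial ℤ :=
  ∑ I ∈ (Finset.univ : Finset E).powerset,
    Polynomial.C ((-1 : ℤ) ^ I.card) * Polynomial.X ^ (M.rk Finset.univ - M.rk I)

/-- The reduced characteristic polynomial `χ̄_M(λ) = χ_M(λ)/(λ-1)`. -/
noncomputable def redCharPoly (M : FinMatroid E) : Polynomial ℤ :=
  M.charPoly /ₘ (Polynomial.X - 1)

end FinMatroid

open scoped Classical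

namespace FinMatroid

variable {E : Type*} [DecidableEq E] [Fintype E]

/-- The nonempty proper flats of a matroid. -/
def Flt (M : FinMatroid E) : Type _ :=
  {F : Finset E // M.IsFlat F ∧ F.Nonempty ∧ F ≠ Finset.univ}

noncomputable instance (M : FinMatroid E) : Fintype M.Flt := by
  unfold Flt; infer_instance

/-- The ideal of relations defining the Chow ring of a matroid:
incomparability relations `x_{F₁} x_{F₂}` for incomparable nonempty proper flats, and
linear relations `Σ_{i₁ ∈ F} x_F - Σ_{i₂ ∈ F} x_F` for distinct ground set elements. -/
noncomputable def chowIdeal (M : FinMatroid E) : Ideal (MvPolynomial M.Flt ℤ) :=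
  Ideal.span
    ({p | ∃ F₁ F₂ : M.Flt, ¬F₁.1 ⊆ F₂.1 ∧ ¬F₂.1 ⊆ F₁.1 ∧
        p = MvPolynomial.X F₁ * MvPolynomial.X F₂} ∪
     {p | ∃ i₁ i₂ : E, i₁ ≠ i₂ ∧
        p = (∑ F : M.Flt, if i₁ ∈ F.1 then MvPolynomial.X F else 0) -
            (∑ F : M.Flt, if i₂ ∈ F.1 then MvPolynomial.X F else 0)})

/-- The Chow ring `A*(M)` of a matroid. -/
noncomputable abbrev ChowRing (M : FinMatroid E) := MvPolynomial M.Flt ℤ ⧸ M.chowIdeal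

end FinMatroid

/-! `β_i = Σ_F x_F - α_i` and the linear relations identify all `α_i`, so `β` does not depend
on `i`. Multiply a descending flag `F₁ ⊊ ⋯ ⊊ F_k` by `β` taken at `i = min F₁`: a term `x_G`
with `i ∉ G` is killed unless `G` is comparable with `F₁`, and as `i ∈ F₁` this forces `G ⊆ F₁`,
i.e. `G ⊊ F₁` with `min G > min F₁`. So the surviving terms are exactly the descending flags
`G ⊊ F₁ ⊊ ⋯ ⊊ F_k`, each once, and induction on `k` starts from `β = β₀ = Σ_{0 ∉ F} x_F`. -/

theorem Finset.ssubset_and_min'_lt_min'_iff {α : Type*} [LinearOrder α] {s t : Finset α}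
    (hs : s.Nonempty) (ht : t.Nonempty) :
    s ⊂ t ∧ t.min' ht < s.min' hs ↔ s ⊆ t ∧ t.min' ht ∉ s := by
  constructor
  · rintro ⟨hst, hlt⟩
    exact ⟨hst.subset, fun hmem => (s.min'_le _ hmem).not_gt hlt⟩
  · rintro ⟨hst, hnot⟩
    have hne : s ≠ t := fun h => hnot (h ▸ t.min'_mem ht)
    refine ⟨ssubset_of_subset_of_ne hst hne,
      (min'_subset hs hst).lt_of_ne fun h => hnot (h ▸ s.min'_mem hs)⟩

namespace FinMatroid

open MvPolynomial

section ChowRing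

variable {E : Type*} [DecidableEq E] [Fintype E] (M : FinMatroid E)

noncomputable def chowX (F : M.Flt) : M.ChowRing := Ideal.Quotient.mk M.chowIdeal (X F)

noncomputable def alpha (i : E) : M.ChowRing := ∑ F : M.Flt, if i ∈ F.1 then M.chowX F else 0

noncomputable def beta (i : E) : M.ChowRing := ∑ F : M.Flt, if i ∉ F.1 then M.chowX F else 0

theorem alpha_eq_alpha (i j : E) : M.alpha i = M.alpha j := by
  rcases eq_or_ne i j with rfl | hij
  · rfl
  have hmk (l : E) : M.alpha l =
      Ideal.Quotient.mk M.chowIdeal (∑ F : M.Flt, if l ∈ F.1 then X F else 0) := by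
    simp only [alpha, chowX, map_sum, apply_ite, map_zero]
  rw [hmk, hmk]
  exact Ideal.Quotient.eq.mpr (Ideal.subset_span (Or.inr ⟨i, j, hij, rfl⟩))

theorem beta_eq_sum_sub_alpha (i : E) : M.beta i = ∑ F : M.Flt, M.chowX F - M.alpha i := by
  rw [alpha, ← sum_sub_distrib]
  refine sum_congr rfl fun F _ => ?_
  by_cases h : i ∈ F.1 <;> simp [h]

theorem beta_eq_beta (i j : E) : M.beta i = M.beta j := by
  rw [beta_eq_sum_sub_alpha, beta_eq_sum_sub_alpha, alpha_eq_alpha M i j]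

theorem mk_sum_X_not_mem_eq_beta (i : E) :
    Ideal.Quotient.mk M.chowIdeal (∑ F : M.Flt, if i ∉ F.1 then X F else 0) = M.beta i := by
  simp only [beta, chowX, map_sum, apply_ite, map_zero]

theorem chowX_mul_chowX_of_not_subset {F G : M.Flt} (hFG : ¬F.1 ⊆ G.1) (hGF : ¬G.1 ⊆ F.1) :
    M.chowX F * M.chowX G = 0 := by
  rw [chowX, chowX, ← map_mul, Ideal.Quotient.eq_zero_iff_mem]
  exact Ideal.subset_span (Or.inl ⟨F, G, hFG, hGF, rfl⟩)

theorem chowX_mul_beta {F : M.Flt} {i : E} (hi : i ∈ F.1) :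
    M.chowX F * M.beta i =
      M.chowX F * ∑ G : M.Flt, if G.1 ⊆ F.1 ∧ i ∉ G.1 then M.chowX G else 0 := by
  rw [beta, mul_sum, mul_sum]
  refine sum_congr rfl fun G _ => ?_
  by_cases hiG : i ∈ G.1
  · simp [hiG]
  by_cases hGF : G.1 ⊆ F.1
  · simp [hiG, hGF]
  rw [if_pos hiG, if_neg (by tauto),
    chowX_mul_chowX_of_not_subset M (fun hFG => hiG (hFG hi)) hGF, mul_zero]

end ChowRing

section Flags

variable {n : ℕ} {M : FinMatroid (Fin (n + 1))}

noncomputable def Flt.min (F : M.Flt) : Fin (n + 1) := F.1.min' F.2.2.1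

theorem Flt.zero_lt_min_iff (F : M.Flt) : 0 < F.min ↔ 0 ∉ F.1 := by
  simp only [Flt.min, lt_min'_iff, Fin.pos_iff_ne_zero]
  exact ⟨fun h h0 => h 0 h0 rfl, fun h y hy hy0 => h (hy0 ▸ hy)⟩

variable (M)

theorem chowX_mul_beta_min (F : M.Flt) :
    M.chowX F * M.beta F.min =
      M.chowX F * ∑ G : M.Flt, if G.1 ⊂ F.1 ∧ F.min < G.min then M.chowX G else 0 := by
  simp only [Flt.min, Finset.ssubset_and_min'_lt_min'_iff]
  exact M.chowX_mul_beta (F.1.min'_mem F.2.2.1)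

def IsDescendingFlag {k : ℕ} (𝓕 : Fin k → M.Flt) : Prop :=
  StrictMono (fun m => (𝓕 m).1) ∧ StrictAnti (fun m => (𝓕 m).min) ∧ ∀ m, 0 < (𝓕 m).min

theorem isDescendingFlag_fin_one_iff (𝓕 : Fin 1 → M.Flt) :
    M.IsDescendingFlag 𝓕 ↔ 0 ∉ (𝓕 0).1 := by
  simp [IsDescendingFlag, Subsingleton.strictMono, Subsingleton.strictAnti, Fin.forall_fin_one,
    Flt.zero_lt_min_iff]

theorem isDescendingFlag_cons_iff {k : ℕ} (G : M.Flt) (𝓕 : Fin (k + 1) → M.Flt) :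
    M.IsDescendingFlag (Fin.cons G 𝓕) ↔
      (G.1 ⊂ (𝓕 0).1 ∧ (𝓕 0).min < G.min) ∧ M.IsDescendingFlag 𝓕 := by
  have hval : (fun m => ((Fin.cons G 𝓕 : Fin (k + 2) → M.Flt) m).1) =
      Fin.cons G.1 fun m => (𝓕 m).1 := funext (Fin.cases rfl fun _ => rfl)
  have hmin : (fun m => ((Fin.cons G 𝓕 : Fin (k + 2) → M.Flt) m).min) =
      Fin.cons G.min fun m => (𝓕 m).min := funext (Fin.cases rfl fun _ => rfl)
  have hmono := strictMono_vecCons (a := G.1) (f := fun m => (𝓕 m).1)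
  have hanti := strictAnti_vecCons (a := G.min) (f := fun m => (𝓕 m).min)
  unfold IsDescendingFlag
  rw [hval, hmin, Fin.forall_fin_succ]
  simp only [Matrix.vecCons] at hmono hanti
  rw [hmono, hanti, Fin.cons_zero]
  simp only [Fin.cons_succ]
  exact ⟨fun ⟨⟨h1, hSM⟩, ⟨h2, hSA⟩, _, hpos⟩ => ⟨⟨h1, h2⟩, hSM, hSA, hpos⟩,
    fun ⟨⟨h1, h2⟩, hSM, hSA, hpos⟩ => ⟨⟨h1, hSM⟩, ⟨h2, hSA⟩, (hpos 0).trans h2, hpos⟩⟩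

theorem isDescendingFlag_iff_zero_lt_min_last {k : ℕ} (𝓕 : Fin (k + 1) → M.Flt) :
    M.IsDescendingFlag 𝓕 ↔ StrictMono (fun m => (𝓕 m).1) ∧ StrictAnti (fun m => (𝓕 m).min) ∧
      0 < (𝓕 (Fin.last k)).min :=
  and_congr_right fun _ => and_congr_right fun hanti =>
    ⟨fun hpos => hpos _, fun hlast m => hlast.trans_le (hanti.antitone (Fin.le_last m))⟩

-- Summing over all tuples with an indicator lets `Fin.consEquiv` split off the smallest flat.
noncomputable def flagSum (k : ℕ) : M.ChowRing :=
  ∑ 𝓕 : Fin k → M.Flt, if M.IsDescendingFlag 𝓕 then ∏ m, M.chowX (𝓕 m) else 0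

theorem flagSum_one : M.flagSum 1 = M.beta 0 := by
  rw [flagSum, beta, ← (Equiv.funUnique (Fin 1) M.Flt).symm.sum_comp]
  refine sum_congr rfl fun F _ => ?_
  simp [isDescendingFlag_fin_one_iff]

theorem flagSum_mul_beta (k : ℕ) : M.flagSum (k + 1) * M.beta 0 = M.flagSum (k + 2) := by
  have hstep (𝓕 : Fin (k + 1) → M.Flt) :
      (if M.IsDescendingFlag 𝓕 then ∏ m, M.chowX (𝓕 m) else 0) * M.beta 0 =
        ∑ G : M.Flt, if M.IsDescendingFlag (Fin.cons G 𝓕) then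
          ∏ m, M.chowX ((Fin.cons G 𝓕 : Fin (k + 2) → M.Flt) m) else 0 := by
    by_cases h𝓕 : M.IsDescendingFlag 𝓕
    · rw [if_pos h𝓕, M.beta_eq_beta 0 (𝓕 0).min, Fin.prod_univ_succ, mul_right_comm,
        chowX_mul_beta_min, mul_sum, sum_mul]
      refine sum_congr rfl fun G _ => ?_
      simp only [isDescendingFlag_cons_iff, h𝓕, and_true, Fin.prod_univ_succ,
        Fin.cons_zero, Fin.cons_succ]
      split_ifs <;> ring
    · simp [h𝓕, isDescendingFlag_cons_iff]
  rw [flagSum, sum_mul, sum_congr rfl fun 𝓕 _ => hstep 𝓕, sum_comm, flagSum,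
    ← (Fin.consEquiv fun _ => M.Flt).sum_comp, Fintype.sum_prod_type]
  rfl

theorem flagSum_eq_sum_subtype (k : ℕ) :
    M.flagSum k = ∑ 𝓕 : {𝓕 : Fin k → M.Flt // M.IsDescendingFlag 𝓕}, ∏ m, M.chowX (𝓕.1 m) := by
  rw [flagSum, ← sum_filter]
  exact sum_subtype _ (by simp) _

theorem beta_pow_eq_flagSum (i : Fin (n + 1)) (k : ℕ) :
    M.beta i ^ (k + 1) = M.flagSum (k + 1) := by
  rw [M.beta_eq_beta i 0]
  induction k with
  | zero => rw [pow_one, flagSum_one]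
  | succ k ih => rw [pow_succ, ih, flagSum_mul_beta]

end Flags

end FinMatroid

theorem beta_pow_eq_descending_flags (n k : ℕ) (M : FinMatroid (Fin (n + 1))) (hk : 1 ≤ k)
    (i : Fin (n + 1)) :
    (Ideal.Quotient.mk M.chowIdeal
        (∑ F : M.Flt, if i ∉ F.1 then MvPolynomial.X F else 0)) ^ k =
    Ideal.Quotient.mk M.chowIdeal
      (∑ 𝓕 : {𝓕 : Fin k → M.Flt //
          (∀ m m' : Fin k, m < m' → (𝓕 m).1 ⊂ (𝓕 m').1) ∧
          (∀ m m' : Fin k, m < m' →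
            (𝓕 m').1.min' (𝓕 m').2.2.1 < (𝓕 m).1.min' (𝓕 m).2.2.1) ∧
          (0 : Fin (n + 1)) < (𝓕 ⟨k - 1, by omega⟩).1.min' (𝓕 ⟨k - 1, by omega⟩).2.2.1},
        ∏ m : Fin k, MvPolynomial.X (𝓕.1 m)) := by
  obtain ⟨k, rfl⟩ : ∃ k', k = k' + 1 := ⟨k - 1, by omega⟩
  rw [M.mk_sum_X_not_mem_eq_beta, M.beta_pow_eq_flagSum, M.flagSum_eq_sum_subtype, map_sum]
  exact Fintype.sum_equiv (Equiv.subtypeEquivRight M.isDescendingFlag_iff_zero_lt_min_last) _ _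
    fun 𝓕 => (map_prod _ _ _).symm
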